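/- Let K : D × [0, t₀] → ℝ be C² in t on a compact convex set D ⊂ ℝ², let μ_m(t) = K(I_m, t) and μ_n(t) = K(I_n, t) with I_m, I_n ∈ D, and suppose |∂_t μ_m(t_*) − ∂_t μ_n(t_*)| ≥ C h^{3/4} for some t_* and that the second t-derivatives are uniformly bounded by M. Fix γ > 3/2. Then there are constants C̃₁, C̃₂ > 0 (depending only on C, M) such that for all sufficiently small h > 0, the set {t ∈ [t_* − C̃₁ h^{3/4}, t_* + C̃₁ h^{3/4}] : |μ_m(t) − μ_n(t)| < h^γ} has Lebesgue measure at most C̃₂ h^{γ − 3/4}, which is at most C̃₂ h^{γ−3/2} · h^{3/4}. -/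

import Mathlib

/-!
Put `f = μ_m - μ_n`. Since `f'` is Lipschitz near `t_*` (as `f` is `C²`), on a window of length
comparable to `h^{3/4}` around `t_*` the derivative `f'` keeps the sign of `f'(t_*)` and has size at
least `C h^{3/4} / 2`. There `f` is strictly monotone with that slope, so the set where `|f| < h^γ`
has diameter at most `4 h^γ / (C h^{3/4})`.
-/

open MeasureTheory Set

theorem volume_setOf_abs_lt_le_of_le_deriv {f : ℝ → ℝ} {s : Set ℝ} {c ε : ℝ} (hs : Convex ℝ s)
    (hf : DifferentiableOn ℝ f s) (hc : 0 < c) (hderiv : ∀ t ∈ s, c ≤ deriv f t) :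
    volume {t ∈ s | |f t| < ε} ≤ ENNReal.ofReal (2 * ε / c) := by
  have hslope := hs.mul_sub_le_image_sub_of_le_deriv hf.continuousOn (hf.mono interior_subset)
    fun t ht => hderiv t (interior_subset ht)
  refine (Real.volume_le_diam _).trans <| Metric.ediam_le fun u hu v hv => ?_
  wlog huv : u ≤ v generalizing u v
  · rw [edist_comm]
    exact this v hv u hu (le_of_not_ge huv)
  rw [edist_dist, Real.dist_eq, abs_sub_comm, abs_of_nonneg (sub_nonneg.mpr huv)]
  refine ENNReal.ofReal_le_ofReal ((le_div_iff₀ hc).mpr ?_)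
  have hfu := abs_lt.mp hu.2
  have hfv := abs_lt.mp hv.2
  linarith [hslope u hu.1 v hv.1 huv]

theorem volume_setOf_abs_lt_le_of_abs_deriv_sub_le {f : ℝ → ℝ} {s : Set ℝ} {c d ε : ℝ}
    (hs : Convex ℝ s) (hf : DifferentiableOn ℝ f s) (hc : 0 < c)
    (hderiv : ∀ t ∈ s, |deriv f t - d| ≤ |d| - c) :
    volume {t ∈ s | |f t| < ε} ≤ ENNReal.ofReal (2 * ε / c) := by
  rcases le_or_gt 0 d with hd | hd
  · refine volume_setOf_abs_lt_le_of_le_deriv hs hf hc fun t ht => ?_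
    have := (abs_le.mp (hderiv t ht)).1
    rw [abs_of_nonneg hd] at this
    linarith
  · have := volume_setOf_abs_lt_le_of_le_deriv (f := -f) (ε := ε) hs hf.neg hc
      fun t ht => ?_
    · simpa only [Pi.neg_apply, abs_neg] using this
    have := (abs_le.mp (hderiv t ht)).2
    rw [abs_of_neg hd] at this
    rw [deriv.neg]
    linarith

theorem volume_setOf_abs_lt_le_of_lipschitzOnWith_deriv {f : ℝ → ℝ} {L : NNReal} {a δ c ε : ℝ}
    (hf : Differentiable ℝ f) (hL : LipschitzOnWith L (deriv f) (Icc (a - δ) (a + δ)))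
    (hc : 0 < c) (hgap : L * δ + c ≤ |deriv f a|) :
    volume {t ∈ Icc (a - δ) (a + δ) | |f t| < ε} ≤ ENNReal.ofReal (2 * ε / c) := by
  refine volume_setOf_abs_lt_le_of_abs_deriv_sub_le (d := deriv f a) (convex_Icc _ _) hf.differentiableOn hc
    fun t ht => ?_
  have ha : a ∈ Icc (a - δ) (a + δ) := ⟨by linarith [ht.1, ht.2], by linarith [ht.1, ht.2]⟩
  have hta : dist t a ≤ δ := by
    rw [Real.dist_eq, abs_le]
    exact ⟨by linarith [ht.1], by linarith [ht.2]⟩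
  calc |deriv f t - deriv f a| = dist (deriv f t) (deriv f a) := (Real.dist_eq _ _).symm
    _ ≤ L * dist t a := hL.dist_le_mul t ht a ha
    _ ≤ L * δ := by gcongr
    _ ≤ |deriv f a| - c := by linarith

theorem stmt_2_general (D : Set (EuclideanSpace ℝ (Fin 2)))
    (t₀ : ℝ)
    (K : EuclideanSpace ℝ (Fin 2) → ℝ → ℝ)
    (I_m I_n : EuclideanSpace ℝ (Fin 2)) (hIm : I_m ∈ D) (hIn : I_n ∈ D)
    (hK : ∀ I ∈ D, ContDiff ℝ 2 (K I))
    (C γ : ℝ) (hC : 0 < C) :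
    ∃ C1 > (0 : ℝ), ∃ C2 > (0 : ℝ), ∃ h₁ > (0 : ℝ), ∀ h : ℝ, 0 < h → h < h₁ →
      ∀ t_star ∈ Set.Icc 0 t₀,
        C * h ^ ((3 : ℝ)/4) ≤ |deriv (K I_m) t_star - deriv (K I_n) t_star| →
        volume {t ∈ Set.Icc (t_star - C1 * h ^ ((3 : ℝ)/4)) (t_star + C1 * h ^ ((3 : ℝ)/4)) |
            |K I_m t - K I_n t| < h ^ γ} ≤
          ENNReal.ofReal (C2 * h ^ (γ - 3/4)) ∧
        C2 * h ^ (γ - 3/4) ≤ C2 * h ^ (γ - 3/2) * h ^ ((3 : ℝ)/4) := by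
  set f : ℝ → ℝ := fun t => K I_m t - K I_n t
  have hf : ContDiff ℝ 2 f := (hK I_m hIm).sub (hK I_n hIn)
  have hderiv_f (t : ℝ) : deriv f t = deriv (K I_m) t - deriv (K I_n) t :=
    deriv_sub ((hK I_m hIm).differentiable two_ne_zero t) ((hK I_n hIn).differentiable two_ne_zero t)
  obtain ⟨L, hL⟩ : ∃ L, LipschitzOnWith L (deriv f) (Icc (-1) (t₀ + 1)) :=
    (hf.deriv' (n := 1)).contDiffOn.exists_lipschitzOnWith one_ne_zero (convex_Icc _ _)
      isCompact_Icc
  set C1 := min (C / (2 * (L + 1))) 1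
  have hLC1 : L * C1 ≤ C / 2 := by
    calc L * C1 ≤ (L + 1) * (C / (2 * (L + 1))) := by gcongr <;> simp [C1]
      _ = C / 2 := by field_simp
  refine ⟨C1, by positivity, 4 / C, by positivity, 1, one_pos,
    fun h hh0 hh1 t_star ht_star hgap => ⟨?_, ?_⟩⟩
  · set p := h ^ ((3 : ℝ)/4) with hp
    have hp0 : 0 < p := Real.rpow_pos_of_pos hh0 _
    have hδ : C1 * p ≤ 1 :=
      mul_le_one₀ (min_le_right _ _) hp0.le (Real.rpow_le_one hh0.le hh1.le (by norm_num))
    have hwindow : Icc (t_star - C1 * p) (t_star + C1 * p) ⊆ Icc (-1) (t₀ + 1) :=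
      Icc_subset_Icc (by linarith [ht_star.1]) (by linarith [ht_star.2])
    have hLδ : L * (C1 * p) + C / 2 * p ≤ |deriv f t_star| := by
      rw [hderiv_f]
      nlinarith
    calc _ ≤ ENNReal.ofReal (2 * h ^ γ / (C / 2 * p)) :=
          volume_setOf_abs_lt_le_of_lipschitzOnWith_deriv (hf.differentiable two_ne_zero)
            (hL.mono hwindow) (by positivity) hLδ
      _ = ENNReal.ofReal (4 / C * h ^ (γ - 3/4)) := by
          rw [hp, Real.rpow_sub hh0]
          congr 1
          field_simp
          ring
  · rw [mul_assoc, ← Real.rpow_add hh0, sub_add, show (3 : ℝ) / 2 - 3 / 4 = 3 / 4 by norm_num]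

theorem stmt_2 (D : Set (EuclideanSpace ℝ (Fin 2))) (hDcomp : IsCompact D)
    (hDconv : Convex ℝ D) (t₀ : ℝ) (ht₀ : 0 < t₀)
    (K : EuclideanSpace ℝ (Fin 2) → ℝ → ℝ)
    (I_m I_n : EuclideanSpace ℝ (Fin 2)) (hIm : I_m ∈ D) (hIn : I_n ∈ D)
    (hK : ∀ I ∈ D, ContDiff ℝ 2 (K I))
    (C M γ : ℝ) (hC : 0 < C) (hM : 0 < M) (hγ : 3/2 < γ)
    (hsecond : ∀ I ∈ D, ∀ t ∈ Set.Icc 0 t₀, |deriv (deriv (K I)) t| ≤ M) :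
    ∃ C1 > (0 : ℝ), ∃ C2 > (0 : ℝ), ∃ h₁ > (0 : ℝ), ∀ h : ℝ, 0 < h → h < h₁ →
      ∀ t_star ∈ Set.Icc 0 t₀,
        C * h ^ ((3 : ℝ)/4) ≤ |deriv (K I_m) t_star - deriv (K I_n) t_star| →
        volume {t ∈ Set.Icc (t_star - C1 * h ^ ((3 : ℝ)/4)) (t_star + C1 * h ^ ((3 : ℝ)/4)) |
            |K I_m t - K I_n t| < h ^ γ} ≤
          ENNReal.ofReal (C2 * h ^ (γ - 3/4)) ∧
        C2 * h ^ (γ - 3/4) ≤ C2 * h ^ (γ - 3/2) * h ^ ((3 : ℝ)/4) :=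
  stmt_2_general D t₀ K I_m I_n hIm hIn hK C γ hC
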